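/- arXiv:2408.03984 — 5 statements merged into one kernel-verified Lean document; each statement's English description precedes it below -/
import Mathlib

section
/- Let A be a finite abelian group with nondegenerate symmetric bilinear form θ, and suppose v ∈ A satisfies θ(v,v)=0. Let n be the order of v, and let ⟨v⟩ be the cyclic subgroup generated by v. Then ⟨v⟩ ≤ ⟨v⟩⊥, the quotient A' = ⟨v⟩⊥/⟨v⟩ carries an induced nondegenerate symmetric bilinear form, and |A| = n² · |A'|. -/
/-- The orthogonal complement of a set `S` with respect to a bilinear form `θ`,
as a subgroup. -/
def perpSubgroup {A : Type*} [CommGroup A] (θ : A → A → Real.Angle)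
    (hbil : ∀ a b d : A, θ (a * b) d = θ a d + θ b d) (S : Set A) : Subgroup A where
  carrier := {a : A | ∀ b ∈ S, θ a b = 0}
  one_mem' := by
    intro b _
    have h := hbil 1 1 b
    rw [one_mul] at h
    exact left_eq_add.mp h
  mul_mem' := by
    intro a b ha hb d hd
    rw [hbil, ha d hd, hb d hd, add_zero]
  inv_mem' := by
    intro a ha d hd
    have h1 : θ 1 d = 0 := by
      have h := hbil 1 1 d
      rw [one_mul] at h
      exact left_eq_add.mp h
    have h := hbil a a⁻¹ d
    rw [mul_inv_cancel a, h1, ha d hd] at h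
    simpa using h.symm

/-!
For a subgroup `T ≤ A`, the form gives an embedding `a ↦ θ(a, ·)|_T` of `A/T⊥` into the
characters `T → ℝ/2πℤ`, and, by nondegeneracy, an embedding `t ↦ θ(·, t)` of `T` into the
characters of `A/T⊥`. A finite abelian group has at most as many characters as elements, so
`|A| = |T| · |T⊥|`. Applied to `T` and `T⊥` this gives `T⊥⊥ = T`, which is the
nondegeneracy of the induced form on `T⊥/T`; for isotropic `T` it gives `|A| = |T|² · |T⊥/T|`.
-/

open Real

namespace Real.Angle

noncomputable def toCircleHom : Multiplicative Angle →* Circle where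
  toFun θ := (Multiplicative.toAdd θ).toCircle
  map_one' := toCircle_zero
  map_mul' _ _ := toCircle_add _ _

lemma toCircleHom_injective : Function.Injective toCircleHom :=
  Function.LeftInverse.injective
    (g := fun z : Circle => Multiplicative.ofAdd ((z : ℂ).arg : Angle))
    fun θ : Multiplicative Angle => congrArg Multiplicative.ofAdd (arg_toCircle θ.toAdd)

noncomputable def toCircleUnits : Multiplicative Angle →* Circleˣ :=
  (toUnits : Circle ≃* Circleˣ).toMonoidHom.comp toCircleHom

lemma toCircleUnits_injective : Function.Injective toCircleUnits :=
  toUnits.injective.comp toCircleHom_injective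

lemma toCircleUnits_comp_injective {B : Type*} [MulOneClass B] :
    Function.Injective fun χ : B →* Multiplicative Angle => toCircleUnits.comp χ :=
  fun _ _ => (MonoidHom.cancel_left toCircleUnits_injective).mp

end Real.Angle

section Characters

variable {B : Type*} [CommGroup B] [Finite B]

instance : Finite (B →* Circleˣ) := by
  have : NeZero (Monoid.exponent B) := ⟨Monoid.exponent_ne_zero_of_finite⟩
  exact Finite.of_equiv _
    (CommGroup.monoidHom_mulEquiv_of_hasEnoughRootsOfUnity B Circle).some.toEquiv.symm

instance : Finite (B →* Multiplicative Angle) :=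
  Finite.of_injective _ Angle.toCircleUnits_comp_injective

lemma card_monoidHom_angle_le : Nat.card (B →* Multiplicative Angle) ≤ Nat.card B := by
  have : NeZero (Monoid.exponent B) := ⟨Monoid.exponent_ne_zero_of_finite⟩
  calc Nat.card (B →* Multiplicative Angle) ≤ Nat.card (B →* Circleˣ) :=
        Nat.card_le_card_of_injective _ Angle.toCircleUnits_comp_injective
    _ = Nat.card B := CommGroup.card_monoidHom_of_hasEnoughRootsOfUnity B Circle

end Characters

namespace MonoidHom

variable {G H : Type*} [CommGroup G] [CommGroup H] (β : G →* H →* Multiplicative Angle)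

lemma card_quotient_ker_le [Finite H] : Nat.card (G ⧸ β.ker) ≤ Nat.card H :=
  calc Nat.card (G ⧸ β.ker) = Nat.card β.range :=
        Nat.card_congr (QuotientGroup.quotientKerEquivRange β).toEquiv
    _ ≤ Nat.card (H →* Multiplicative Angle) := Subgroup.card_le_card_group _
    _ ≤ Nat.card H := card_monoidHom_angle_le

lemma card_le_card_quotient_ker [Finite G] (hβ : Function.Injective β.flip) :
    Nat.card H ≤ Nat.card (G ⧸ β.ker) := by
  let ψ : H → (G ⧸ β.ker →* Multiplicative Angle) := fun h =>
    QuotientGroup.lift β.ker (β.flip h) fun g hg => by simp [mem_ker.mp hg]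
  have hψ : Function.Injective ψ := fun h h' e => hβ <| by
    ext g
    exact DFunLike.congr_fun e (g : G ⧸ β.ker)
  calc Nat.card H ≤ Nat.card (G ⧸ β.ker →* Multiplicative Angle) :=
        Nat.card_le_card_of_injective ψ hψ
    _ ≤ Nat.card (G ⧸ β.ker) := card_monoidHom_angle_le

theorem card_eq_card_ker_mul_of_flip_injective [Finite G] [Finite H]
    (hβ : Function.Injective β.flip) : Nat.card G = Nat.card β.ker * Nat.card H := by
  rw [β.ker.card_eq_card_quotient_mul_card_subgroup, mul_comm,
    (β.card_quotient_ker_le).antisymm (β.card_le_card_quotient_ker hβ)]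

end MonoidHom

section Form

variable {A : Type*} [CommGroup A] (θ : A → A → Angle) (hsymm : ∀ a b, θ a b = θ b a)
  (hbil : ∀ a b d : A, θ (a * b) d = θ a d + θ b d)

noncomputable def formPairing : A →* A →* Multiplicative Angle :=
  MonoidHom.mk'
    (fun a => MonoidHom.mk' (fun b => .ofAdd (θ a b)) fun b d => by
      rw [hsymm a (b * d), hbil, hsymm b, hsymm d, ofAdd_add])
    fun a a' => MonoidHom.ext fun b => by
      simp only [MonoidHom.mk'_apply, MonoidHom.mul_apply, hbil, ofAdd_add]

@[simp]
lemma formPairing_apply (a b : A) : formPairing θ hsymm hbil a b = .ofAdd (θ a b) := rfl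

include hsymm hbil in
lemma form_zpow_right (a b : A) (k : ℤ) : θ a (b ^ k) = k • θ a b := by
  simpa using congrArg Multiplicative.toAdd (map_zpow (formPairing θ hsymm hbil a) b k)

lemma perpSubgroup_eq_ker (T : Subgroup A) :
    perpSubgroup θ hbil T = ((formPairing θ hsymm hbil).compl₂ T.subtype).ker := by
  ext a
  simp [perpSubgroup, MonoidHom.ext_iff]

include hsymm in
lemma form_eq_of_inv_mul_mem {S : Subgroup A} {x x' y : A} (hx : x⁻¹ * x' ∈ S)
    (hy : y ∈ perpSubgroup θ hbil S) : θ x' y = θ x y := by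
  rw [← mul_inv_cancel_left x x', hbil, hsymm (x⁻¹ * x'), hy _ hx, add_zero]

include hsymm in
theorem zpowers_le_perpSubgroup {v : A} (hv : θ v v = 0) :
    Subgroup.zpowers v ≤ perpSubgroup θ hbil (Subgroup.zpowers v) := by
  rw [Subgroup.zpowers_le]
  rintro _ ⟨k, rfl⟩
  change θ v (v ^ k) = 0
  rw [form_zpow_right θ hsymm hbil, hv, smul_zero]

noncomputable def perpQuotientForm (S : Subgroup A) :
    perpSubgroup θ hbil S ⧸ S.subgroupOf (perpSubgroup θ hbil S) →
      perpSubgroup θ hbil S ⧸ S.subgroupOf (perpSubgroup θ hbil S) → Angle :=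
  Quotient.lift₂ (fun x y => θ x y) fun x y x' y' hx hy => by
    replace hx := Subgroup.mem_subgroupOf.mp (QuotientGroup.leftRel_apply.mp hx)
    replace hy := Subgroup.mem_subgroupOf.mp (QuotientGroup.leftRel_apply.mp hy)
    calc θ x y = θ y x := hsymm _ _
      _ = θ y' x := (form_eq_of_inv_mul_mem θ hsymm hbil hy x.2).symm
      _ = θ x y' := hsymm _ _
      _ = θ x' y' := (form_eq_of_inv_mul_mem θ hsymm hbil hx y'.2).symm

lemma perpQuotientForm_comm (S : Subgroup A)
    (x y : perpSubgroup θ hbil S ⧸ S.subgroupOf (perpSubgroup θ hbil S)) :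
    perpQuotientForm θ hsymm hbil S x y = perpQuotientForm θ hsymm hbil S y x := by
  induction x using QuotientGroup.induction_on
  induction y using QuotientGroup.induction_on
  exact hsymm _ _

lemma perpQuotientForm_mul_left (S : Subgroup A)
    (x y z : perpSubgroup θ hbil S ⧸ S.subgroupOf (perpSubgroup θ hbil S)) :
    perpQuotientForm θ hsymm hbil S (x * y) z =
      perpQuotientForm θ hsymm hbil S x z + perpQuotientForm θ hsymm hbil S y z := by
  induction x using QuotientGroup.induction_on
  induction y using QuotientGroup.induction_on
  induction z using QuotientGroup.induction_on
  exact hbil _ _ _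

variable (hnd : ∀ a : A, (∀ b : A, θ a b = 0) → a = 1)
include hsymm hnd

lemma flip_compl₂_subtype_injective (T : Subgroup A) :
    Function.Injective ((formPairing θ hsymm hbil).compl₂ T.subtype).flip := by
  refine (injective_iff_map_eq_one _).mpr fun t ht => Subtype.ext <| hnd t fun a => ?_
  rw [hsymm]
  simpa using congrArg Multiplicative.toAdd (DFunLike.congr_fun ht a)

theorem card_eq_card_perpSubgroup_mul_card [Finite A] (T : Subgroup A) :
    Nat.card A = Nat.card (perpSubgroup θ hbil T) * Nat.card T := by
  rw [perpSubgroup_eq_ker θ hsymm]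
  exact MonoidHom.card_eq_card_ker_mul_of_flip_injective _
    (flip_compl₂_subtype_injective θ hsymm hbil hnd T)

theorem perpSubgroup_perpSubgroup [Finite A] (T : Subgroup A) :
    perpSubgroup θ hbil (perpSubgroup θ hbil T) = T := by
  have hle : T ≤ perpSubgroup θ hbil (perpSubgroup θ hbil T) :=
    fun t ht b hb => (hsymm t b).trans (hb t ht)
  refine (Subgroup.eq_of_le_of_card_ge hle
    (Nat.eq_of_mul_eq_mul_left (Nat.card_pos (α := perpSubgroup θ hbil T)) ?_).le).symm
  rw [mul_comm, ← card_eq_card_perpSubgroup_mul_card θ hsymm hbil hnd,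
    ← card_eq_card_perpSubgroup_mul_card θ hsymm hbil hnd]

theorem card_eq_card_sq_mul_card_perpQuotient [Finite A] {S : Subgroup A}
    (hS : S ≤ perpSubgroup θ hbil S) :
    Nat.card A = Nat.card S ^ 2 *
      Nat.card (perpSubgroup θ hbil S ⧸ S.subgroupOf (perpSubgroup θ hbil S)) := by
  rw [card_eq_card_perpSubgroup_mul_card θ hsymm hbil hnd S,
    Subgroup.card_eq_card_quotient_mul_card_subgroup (S.subgroupOf _),
    Nat.card_congr (Subgroup.subgroupOfEquivOfLe hS).toEquiv]
  ring

theorem eq_one_of_perpQuotientForm_eq_zero [Finite A] {S : Subgroup A}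
    (x : perpSubgroup θ hbil S ⧸ S.subgroupOf (perpSubgroup θ hbil S))
    (hx : ∀ y, perpQuotientForm θ hsymm hbil S x y = 0) : x = 1 := by
  induction x using QuotientGroup.induction_on with | H x => ?_
  rw [QuotientGroup.eq_one_iff, Subgroup.mem_subgroupOf]
  refine (perpSubgroup_perpSubgroup θ hsymm hbil hnd S).le fun y hy => ?_
  exact hx (QuotientGroup.mk ⟨y, hy⟩)

end Form

/-- Condensing a boson `v` (an element with `θ(v,v) = 0`): the cyclic subgroup `⟨v⟩`
is contained in its complement `⟨v⟩⊥`, the quotient `A' = ⟨v⟩⊥/⟨v⟩` carries an induced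
nondegenerate symmetric bilinear form, and `|A| = n² · |A'|` where `n` is the order of `v`. -/
theorem condensation {A : Type*} [CommGroup A] [Fintype A]
    (θ : A → A → Real.Angle)
    (hsymm : ∀ a b : A, θ a b = θ b a)
    (hbil : ∀ a b d : A, θ (a * b) d = θ a d + θ b d)
    (hnd : ∀ a : A, (∀ b : A, θ a b = 0) → a = 1)
    (v : A) (hv : θ v v = 0)
    (P : Subgroup A)
    (hP : P = perpSubgroup θ hbil (Subgroup.zpowers v : Set A)) :
    Subgroup.zpowers v ≤ P ∧
    ∃ θ' : (P ⧸ (Subgroup.zpowers v).subgroupOf P) →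
           (P ⧸ (Subgroup.zpowers v).subgroupOf P) → Real.Angle,
      (∀ x y : P, θ' (QuotientGroup.mk x) (QuotientGroup.mk y) = θ (x : A) (y : A)) ∧
      (∀ x y, θ' x y = θ' y x) ∧
      (∀ x y z, θ' (x * y) z = θ' x z + θ' y z) ∧
      (∀ x, (∀ y, θ' x y = 0) → x = 1) ∧
      Nat.card A = (orderOf v) ^ 2 * Nat.card (P ⧸ (Subgroup.zpowers v).subgroupOf P) := by
  subst hP
  have hiso := zpowers_le_perpSubgroup θ hsymm hbil hv
  refine ⟨hiso, perpQuotientForm θ hsymm hbil _, fun _ _ => rfl,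
    perpQuotientForm_comm θ hsymm hbil _, perpQuotientForm_mul_left θ hsymm hbil _,
    eq_one_of_perpQuotientForm_eq_zero θ hsymm hbil hnd, ?_⟩
  rw [card_eq_card_sq_mul_card_perpQuotient θ hsymm hbil hnd hiso, Nat.card_zpowers]
end

section
/- Let A be a finite abelian group with a nondegenerate symmetric bilinear form θ, and let T : A → A be an automorphism with T² = id and θ(Ta, Tb) = −θ(a,b) for all a,b. Define f(a) = a·Ta and g(a) = a·(Ta)⁻¹. Then Im(f) is a subgroup of Ker(g), Ker(g) = Im(f)⊥, and Ker(f) = Im(g)⊥. -/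
/-! The form makes `f` and `g` adjoint to each other: since `θ (T a) b = -θ a (T b)`,
we get `θ x (f y) = θ (g x) y` and `θ x (g y) = θ (f x) y`. Hence `x ⊥ Im f` iff `g x ⊥ A`,
which by nondegeneracy means `g x = 1`; symmetrically for `Ker f`. That `Im f ⊆ Ker g` is
just `T (a · T a) = T a · a`. -/

theorem form_apply_left {A M : Type*} [Neg M] (θ : A → A → M) {T : A → A}
    (hT2 : ∀ a : A, T (T a) = a) (hTθ : ∀ a b : A, θ (T a) (T b) = -θ a b) (a b : A) :
    θ (T a) b = -θ a (T b) := by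
  simpa only [hT2] using hTθ a (T b)

section BiadditiveForm

variable {A M : Type*} [CommGroup A] [AddCommGroup M] (θ : A → A → M)

theorem form_one_left (hbil : ∀ a b d : A, θ (a * b) d = θ a d + θ b d) (b : A) :
    θ 1 b = 0 := by
  simpa using hbil 1 1 b

theorem form_inv_left (hbil : ∀ a b d : A, θ (a * b) d = θ a d + θ b d) (a b : A) :
    θ a⁻¹ b = -θ a b :=
  eq_neg_of_add_eq_zero_left <| by rw [← hbil, inv_mul_cancel, form_one_left θ hbil]

theorem form_mul_right (hsymm : ∀ a b : A, θ a b = θ b a)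
    (hbil : ∀ a b d : A, θ (a * b) d = θ a d + θ b d) (a b d : A) :
    θ a (b * d) = θ a b + θ a d := by
  rw [hsymm, hbil, hsymm b, hsymm d]

theorem form_inv_right (hsymm : ∀ a b : A, θ a b = θ b a)
    (hbil : ∀ a b d : A, θ (a * b) d = θ a d + θ b d) (a b : A) :
    θ a b⁻¹ = -θ a b := by
  rw [hsymm, form_inv_left θ hbil, hsymm]

theorem setOf_eq_one_eq_perp_range_of_adjoint
    (hbil : ∀ a b d : A, θ (a * b) d = θ a d + θ b d)
    (hnd : ∀ a : A, (∀ b : A, θ a b = 0) → a = 1)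
    {F G : A → A} (hadj : ∀ x y : A, θ x (F y) = θ (G x) y) :
    {x : A | G x = 1} = {x : A | ∀ y : A, θ x (F y) = 0} := by
  ext x
  simp only [Set.mem_ofPred_eq, hadj]
  exact ⟨fun hx y => hx ▸ form_one_left θ hbil y, hnd (G x)⟩

variable {T : A → A}

theorem form_mul_apply_right (hsymm : ∀ a b : A, θ a b = θ b a)
    (hbil : ∀ a b d : A, θ (a * b) d = θ a d + θ b d) (hT2 : ∀ a : A, T (T a) = a)
    (hTθ : ∀ a b : A, θ (T a) (T b) = -θ a b) (x y : A) :
    θ x (y * T y) = θ (x * (T x)⁻¹) y := by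
  rw [form_mul_right θ hsymm hbil, hbil, form_inv_left θ hbil, form_apply_left θ hT2 hTθ, neg_neg]

theorem form_mul_inv_apply_right (hsymm : ∀ a b : A, θ a b = θ b a)
    (hbil : ∀ a b d : A, θ (a * b) d = θ a d + θ b d) (hT2 : ∀ a : A, T (T a) = a)
    (hTθ : ∀ a b : A, θ (T a) (T b) = -θ a b) (x y : A) :
    θ x (y * (T y)⁻¹) = θ (x * T x) y := by
  rw [form_mul_right θ hsymm hbil, form_inv_right θ hsymm hbil, hbil, form_apply_left θ hT2 hTθ]

end BiadditiveForm

theorem mul_apply_mul_inv_apply_eq_one {A : Type*} [CommGroup A] {T : A → A}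
    (hThom : ∀ a b : A, T (a * b) = T a * T b) (hT2 : ∀ a : A, T (T a) = a) (a : A) :
    (a * T a) * (T (a * T a))⁻¹ = 1 := by
  rw [hThom, hT2, mul_comm (T a), mul_inv_cancel]

theorem ker_eq_im_perp_general {A : Type*} [CommGroup A]
    (θ : A → A → Real.Angle)
    (hsymm : ∀ a b : A, θ a b = θ b a)
    (hbil : ∀ a b d : A, θ (a * b) d = θ a d + θ b d)
    (hnd : ∀ a : A, (∀ b : A, θ a b = 0) → a = 1)
    (T : A → A)
    (hThom : ∀ a b : A, T (a * b) = T a * T b)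
    (hT2 : ∀ a : A, T (T a) = a)
    (hTθ : ∀ a b : A, θ (T a) (T b) = - θ a b) :
    (∀ a : A, (a * T a) * (T (a * T a))⁻¹ = 1) ∧
    ({x : A | x * (T x)⁻¹ = 1} = {x : A | ∀ y : A, θ x (y * T y) = 0}) ∧
    ({x : A | x * T x = 1} = {x : A | ∀ y : A, θ x (y * (T y)⁻¹) = 0}) :=
  ⟨mul_apply_mul_inv_apply_eq_one hThom hT2,
    setOf_eq_one_eq_perp_range_of_adjoint θ hbil hnd
      (form_mul_apply_right θ hsymm hbil hT2 hTθ),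
    setOf_eq_one_eq_perp_range_of_adjoint θ hbil hnd
      (form_mul_inv_apply_right θ hsymm hbil hT2 hTθ)⟩

/-- For an involutive automorphism `T` reversing a nondegenerate symmetric bilinear form `θ`,
with `f(a) = a·Ta` and `g(a) = a·(Ta)⁻¹`: `Im(f) ⊆ Ker(g)`, `Ker(g) = Im(f)⊥`, and
`Ker(f) = Im(g)⊥`. -/
theorem ker_eq_im_perp {A : Type*} [CommGroup A] [Fintype A]
    (θ : A → A → Real.Angle)
    (hsymm : ∀ a b : A, θ a b = θ b a)
    (hbil : ∀ a b d : A, θ (a * b) d = θ a d + θ b d)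
    (hnd : ∀ a : A, (∀ b : A, θ a b = 0) → a = 1)
    (T : A → A)
    (hThom : ∀ a b : A, T (a * b) = T a * T b)
    (hT2 : ∀ a : A, T (T a) = a)
    (hTθ : ∀ a b : A, θ (T a) (T b) = - θ a b) :
    (∀ a : A, (a * T a) * (T (a * T a))⁻¹ = 1) ∧
    ({x : A | x * (T x)⁻¹ = 1} = {x : A | ∀ y : A, θ x (y * T y) = 0}) ∧
    ({x : A | x * T x = 1} = {x : A | ∀ y : A, θ x (y * (T y)⁻¹) = 0}) :=
  ker_eq_im_perp_general θ hsymm hbil hnd T hThom hT2 hTθ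
end

section
/- Let A be a finite abelian group with a nondegenerate symmetric bilinear form θ : A × A → ℝ/2πℤ, a quadratic refinement θ_• : A → ℝ/2πℤ with θ(a,a) = 2θ_a, and an automorphism T with T² = id, θ(Ta,Tb) = −θ(a,b), and θ_{Ta} = −θ_a for all a,b ∈ A. Then |A| is a perfect square. -/
/-!
Turn `θ` into a nondegenerate symmetric bicharacter `B : A →* A →* Circleˣ`. Duality of finite
abelian groups gives `|H| * |H^⊥| = |A|` and `H^⊥⊥ = H` for every subgroup `H`. The subgroup
`K = {a | T a = a⁻¹}` is the orthogonal of the image of `a ↦ a / T a`, which lies in `K`, so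
`K^⊥ ≤ K`. On `K` the form is alternating: `θ(u,u) = 2 θs u` and `θs u = θs u⁻¹ = θs (T u) = -θs u`.
A maximal isotropic subgroup `L` of `K` contains `K^⊥`, hence `L^⊥ ≤ K`, and any `z ∈ L^⊥` could be
adjoined to `L`; so `L^⊥ = L` and `|A| = |L|²`.
-/

open Subgroup

namespace MonoidHom

variable {A M : Type*} [CommGroup A] [CommMonoid M]

def orthogonal (B : A →* A →* Mˣ) (H : Subgroup A) : Subgroup A :=
  ((domRestrictHom H Mˣ).comp B).ker

variable {B : A →* A →* Mˣ} {H K : Subgroup A}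

theorem mem_orthogonal {a : A} : a ∈ B.orthogonal H ↔ H ≤ (B a).ker := by
  simp only [orthogonal, mem_ker, coe_comp, Function.comp_apply, domRestrictHom_apply]
  constructor
  · intro h x hx
    simpa using DFunLike.congr_fun h ⟨x, hx⟩
  · intro h
    ext x
    simpa using h x.2

theorem orthogonal_le (h : H ≤ K) : B.orthogonal K ≤ B.orthogonal H :=
  fun _ ha => mem_orthogonal.mpr (h.trans (mem_orthogonal.mp ha))

theorem orthogonal_sup : B.orthogonal (H ⊔ K) = B.orthogonal H ⊓ B.orthogonal K := by
  ext a
  simp only [mem_inf, mem_orthogonal, sup_le_iff]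

theorem le_orthogonal_comm (hsymm : ∀ a b, B a b = B b a) :
    H ≤ B.orthogonal K ↔ K ≤ B.orthogonal H := by
  suffices ∀ H K : Subgroup A, H ≤ B.orthogonal K → K ≤ B.orthogonal H from ⟨this H K, this K H⟩
  intro H K h k hk
  exact mem_orthogonal.mpr fun a ha => by
    rw [mem_ker, hsymm]
    exact mem_orthogonal.mp (h ha) hk

theorem zpowers_le_orthogonal_self {z : A} (hz : B z z = 1) :
    zpowers z ≤ B.orthogonal (zpowers z) :=
  zpowers_le.mpr (mem_orthogonal.mpr (zpowers_le.mpr hz))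

section Involution

variable {T : A →* A}

theorem mem_ker_id_mul {a : A} : a ∈ (id A * T).ker ↔ T a = a⁻¹ := by
  rw [mem_ker, mul_apply, id_apply, mul_eq_one_iff_eq_inv']

theorem range_id_div_le_ker_id_mul (hT : ∀ a, T (T a) = a) : (id A / T).range ≤ (id A * T).ker := by
  rintro _ ⟨b, rfl⟩
  rw [mem_ker_id_mul, div_apply, map_div, hT, id_apply, inv_div]

theorem orthogonal_range_id_div (hB : Function.Injective B) (hT : ∀ a, T (T a) = a)
    (hBT : ∀ a b, B (T a) (T b) = (B a b)⁻¹) :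
    B.orthogonal (id A / T).range = (id A * T).ker := by
  ext a
  have hadj : (B a).comp (id A / T) = B ((id A * T) a) := by
    ext b
    have hTb : B a (T b) = (B (T a) b)⁻¹ := by
      rw [← inv_inv (B a (T b)), ← hBT, hT]
    simp [hTb]
  rw [mem_orthogonal, range_le_ker_iff, hadj, mem_ker, (injective_iff_map_eq_one' B).mp hB]

end Involution

variable [Finite A] [HasEnoughRootsOfUnity M (Monoid.exponent A)]

theorem card_mul_card_orthogonal (hB : Function.Injective B) (H : Subgroup A) :
    Nat.card H * Nat.card (B.orthogonal H) = Nat.card A := by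
  have : HasEnoughRootsOfUnity M (Monoid.exponent H) :=
    .of_dvd M (Monoid.exponent_submonoid_dvd H.toSubmonoid)
  have : Finite (A →* Mˣ) := Nat.finite_of_card_ne_zero
    (by simp [CommGroup.card_monoidHom_of_hasEnoughRootsOfUnity, Nat.card_pos.ne'])
  have hBsurj : Function.Surjective B :=
    ((Nat.bijective_iff_injective_and_card B).mpr
      ⟨hB, (CommGroup.card_monoidHom_of_hasEnoughRootsOfUnity A M).symm⟩).2
  have hsurj := (domRestrict_surjective M H).comp hBsurj
  rw [(domRestrictHom H Mˣ).comp B |>.ker.card_eq_card_quotient_mul_card_subgroup,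
    Nat.card_congr (QuotientGroup.quotientKerEquivOfSurjective _ hsurj).toEquiv,
    CommGroup.card_monoidHom_of_hasEnoughRootsOfUnity]
  rfl

theorem orthogonal_orthogonal (hB : Function.Injective B) (hsymm : ∀ a b, B a b = B b a)
    (H : Subgroup A) : B.orthogonal (B.orthogonal H) = H := by
  have hcard := (card_mul_card_orthogonal hB H).trans
    (card_mul_card_orthogonal hB (B.orthogonal H)).symm
  rw [mul_comm] at hcard
  refine (eq_of_le_of_card_ge ((le_orthogonal_comm hsymm).mp le_rfl) ?_).symm
  exact (Nat.eq_of_mul_eq_mul_left Nat.card_pos hcard).ge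

theorem card_eq_sq_of_orthogonal_eq_self (hB : Function.Injective B) {L : Subgroup A}
    (hL : B.orthogonal L = L) : Nat.card A = Nat.card L ^ 2 := by
  rw [← card_mul_card_orthogonal hB L, hL, sq]

theorem exists_orthogonal_eq_self (hB : Function.Injective B) (hsymm : ∀ a b, B a b = B b a)
    (hK : B.orthogonal K ≤ K) (halt : ∀ u ∈ K, B u u = 1) :
    ∃ L : Subgroup A, B.orthogonal L = L := by
  obtain ⟨L, hKL, ⟨hLK, hLL⟩, hmax⟩ := Finite.exists_le_maximal
    (p := fun L : Subgroup A => L ≤ K ∧ L ≤ B.orthogonal L) ⟨hK, orthogonal_le hK⟩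
  refine ⟨L, le_antisymm (fun z hz => ?_) hLL⟩
  have hzK : z ∈ K := by
    rw [← orthogonal_orthogonal hB hsymm K]
    exact orthogonal_le hKL hz
  have hZL : zpowers z ≤ B.orthogonal L := zpowers_le.mpr hz
  have hiso : L ⊔ zpowers z ≤ B.orthogonal (L ⊔ zpowers z) := by
    rw [orthogonal_sup, sup_le_iff, le_inf_iff, le_inf_iff,
      le_orthogonal_comm hsymm (H := L) (K := zpowers z)]
    exact ⟨⟨hLL, hZL⟩, hZL, zpowers_le_orthogonal_self (halt z hzK)⟩
  exact hmax ⟨sup_le hLK (zpowers_le.mpr hzK), hiso⟩ le_sup_left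
    (le_sup_right (a := L) (mem_zpowers z))

theorem exists_orthogonal_eq_self_of_involution (hB : Function.Injective B)
    (hsymm : ∀ a b, B a b = B b a) {T : A →* A} (hT : ∀ a, T (T a) = a)
    (hBT : ∀ a b, B (T a) (T b) = (B a b)⁻¹) (halt : ∀ u, T u = u⁻¹ → B u u = 1) :
    ∃ L : Subgroup A, B.orthogonal L = L := by
  refine exists_orthogonal_eq_self hB hsymm (K := (id A * T).ker) ?_
    fun u hu => halt u (mem_ker_id_mul.mp hu)
  calc B.orthogonal (id A * T).ker = (id A / T).range := by
        rw [← orthogonal_range_id_div hB hT hBT, orthogonal_orthogonal hB hsymm]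
    _ ≤ (id A * T).ker := range_id_div_le_ker_id_mul hT

end MonoidHom

theorem Real.Angle.toCircle_eq_one_iff {x : Real.Angle} : x.toCircle = 1 ↔ x = 0 := by
  refine ⟨fun h => ?_, fun h => h ▸ toCircle_zero⟩
  simpa [h] using (arg_toCircle x).symm

section AngleForm

variable {A : Type*} [CommGroup A] {θ : A → A → Real.Angle}

noncomputable def angleBicharacter (hl : ∀ a b c, θ (a * b) c = θ a c + θ b c)
    (hr : ∀ a b c, θ a (b * c) = θ a b + θ a c) : A →* A →* Circleˣ :=
  .mk' (fun a => .mk' (fun b => toUnits (θ a b).toCircle) fun b c => by simp [hr])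
    fun a b => by ext c; simp [hl]

@[simp]
theorem angleBicharacter_apply (hl : ∀ a b c, θ (a * b) c = θ a c + θ b c)
    (hr : ∀ a b c, θ a (b * c) = θ a b + θ a c) (a b : A) :
    angleBicharacter hl hr a b = toUnits (θ a b).toCircle := rfl

theorem angleBicharacter_apply_eq_one_iff (hl : ∀ a b c, θ (a * b) c = θ a c + θ b c)
    (hr : ∀ a b c, θ a (b * c) = θ a b + θ a c) {a b : A} :
    angleBicharacter hl hr a b = 1 ↔ θ a b = 0 := by
  rw [angleBicharacter_apply, map_eq_one_iff _ toUnits.injective, Real.Angle.toCircle_eq_one_iff]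

theorem quadratic_refinement_inv {θs : A → Real.Angle} (hr : ∀ a b c, θ a (b * c) = θ a b + θ a c)
    (hquad : ∀ a, θ a a = θs a + θs a) (hrel : ∀ a b, θs (a * b) = θs a + θs b + θ a b) (u : A) :
    θs u⁻¹ = θs u := by
  have hθ1 : ∀ a, θ a 1 = 0 := fun a => by simpa using hr a 1 1
  have hs1 : θs 1 = 0 := by simpa [hθ1] using hrel 1 1
  have hθinv : θ u u⁻¹ = -θ u u := eq_neg_of_add_eq_zero_right (by rw [← hr, mul_inv_cancel, hθ1])
  have := hrel u u⁻¹
  rw [mul_inv_cancel, hs1, hθinv, hquad] at this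
  rw [← sub_eq_zero]
  convert this.symm using 1
  abel

end AngleForm

/-- A time-reversal invariant abelian bosonic topological order has anyon count a
perfect square: a finite abelian group with nondegenerate symmetric bilinear form `θ`,
quadratic refinement (topological spin) `θs` with `θ(a,a) = 2θs a` and
`θs (ab) = θs a + θs b + θ(a,b)`, and an automorphism `T` with `T² = id`,
`θ(Ta,Tb) = −θ(a,b)`, `θs (Ta) = −θs a`, has `|A| = l²`. -/
theorem card_sq_of_time_reversal {A : Type*} [CommGroup A] [Fintype A]
    (θ : A → A → Real.Angle) (θs : A → Real.Angle)
    (hsymm : ∀ a b : A, θ a b = θ b a)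
    (hbil : ∀ a b d : A, θ (a * b) d = θ a d + θ b d)
    (hnd : ∀ a : A, (∀ b : A, θ a b = 0) → a = 1)
    (hquad : ∀ a : A, θ a a = θs a + θs a)
    (hrel : ∀ a b : A, θs (a * b) = θs a + θs b + θ a b)
    (T : A → A)
    (hThom : ∀ a b : A, T (a * b) = T a * T b)
    (hT2 : ∀ a : A, T (T a) = a)
    (hTθ : ∀ a b : A, θ (T a) (T b) = - θ a b)
    (hTs : ∀ a : A, θs (T a) = - θs a) :
    ∃ l : ℕ, Nat.card A = l ^ 2 := by
  have hr : ∀ a b c, θ a (b * c) = θ a b + θ a c := fun a b c => by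
    rw [hsymm, hbil, hsymm b, hsymm c]
  set B := angleBicharacter hbil hr
  have hB : Function.Injective B := (injective_iff_map_eq_one B).mpr fun a ha =>
    hnd a fun b => (angleBicharacter_apply_eq_one_iff hbil hr).mp (DFunLike.congr_fun ha b)
  have hBsymm : ∀ a b, B a b = B b a := fun a b => by simp [B, hsymm a b]
  have hBT : ∀ a b, B (T a) (T b) = (B a b)⁻¹ := fun a b => by simp [B, hTθ]
  have halt : ∀ u, T u = u⁻¹ → B u u = 1 := fun u hu => by
    rw [angleBicharacter_apply_eq_one_iff, hquad]
    calc θs u + θs u = θs u + θs (T u) := by rw [hu, quadratic_refinement_inv hr hquad hrel]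
      _ = 0 := by rw [hTs, add_neg_cancel]
  obtain ⟨L, hL⟩ :=
    B.exists_orthogonal_eq_self_of_involution hB hBsymm (T := .mk' T hThom) hT2 hBT halt
  exact ⟨_, B.card_eq_sq_of_orthogonal_eq_self hB hL⟩
end

section
/- Let A be a finite abelian group with nondegenerate symmetric bilinear form θ and automorphism T with T²=id and θ(Ta,Tb)=−θ(a,b). If a ∈ A has order n and θ(a,Ta) = π (in ℝ/2πℤ), then n is even. -/
theorem Real.Angle.addOrderOf_coe_pi : addOrderOf (Real.pi : Real.Angle) = 2 :=
  addOrderOf_eq_prime two_nsmul_coe_pi pi_ne_zero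

theorem Real.Angle.nsmul_coe_pi_eq_zero_iff {n : ℕ} :
    n • (Real.pi : Real.Angle) = 0 ↔ Even n := by
  rw [← addOrderOf_dvd_iff_nsmul_eq_zero, addOrderOf_coe_pi, even_iff_two_dvd]

theorem orderOf_nsmul_eq_zero_of_map_mul {M G : Type*} [Monoid M] [AddGroup G] (f : M → G)
    (hf : ∀ a b, f (a * b) = f a + f b) (a : M) : orderOf a • f a = 0 := by
  let φ : M →* Multiplicative G := MonoidHom.mk' (fun x => .ofAdd (f x)) hf
  calc orderOf a • f a = Multiplicative.toAdd (φ a ^ orderOf a) := rfl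
    _ = Multiplicative.toAdd (φ (a ^ orderOf a)) := by rw [map_pow φ]
    _ = 0 := by rw [pow_orderOf_eq_one, map_one, toAdd_one]

theorem even_order_of_pi_braiding_general {A : Type*} [CommGroup A]
    (θ : A → A → Real.Angle)
    (hbil : ∀ a b d : A, θ (a * b) d = θ a d + θ b d)
    (T : A → A)
    (a : A) (n : ℕ) (hn : orderOf a = n)
    (hpi : θ a (T a) = (Real.pi : Real.Angle)) :
    Even n := by
  have h := orderOf_nsmul_eq_zero_of_map_mul (θ · (T a)) (hbil · · (T a)) a
  rwa [hn, hpi, Real.Angle.nsmul_coe_pi_eq_zero_iff] at h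

/-- If `a` has order `n` and `θ(a, Ta) = π` for an involutive automorphism `T` negating
the nondegenerate symmetric bilinear form `θ`, then `n` is even. -/
theorem even_order_of_pi_braiding {A : Type*} [CommGroup A] [Fintype A]
    (θ : A → A → Real.Angle)
    (hsymm : ∀ a b : A, θ a b = θ b a)
    (hbil : ∀ a b d : A, θ (a * b) d = θ a d + θ b d)
    (hnd : ∀ a : A, (∀ b : A, θ a b = 0) → a = 1)
    (T : A → A)
    (hThom : ∀ a b : A, T (a * b) = T a * T b)
    (hT2 : ∀ a : A, T (T a) = a)
    (hTθ : ∀ a b : A, θ (T a) (T b) = - θ a b)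
    (a : A) (n : ℕ) (hn : orderOf a = n)
    (hpi : θ a (T a) = (Real.pi : Real.Angle)) :
    Even n :=
  even_order_of_pi_braiding_general θ hbil T a n hn hpi
end

section
/- Let n and q be integers with q odd, and suppose the following congruences hold for some integers l, l', m: n(l²+1) ≡ 0 (mod q), n·l'² ≡ 0 (mod q), and l² + m·l' − 1 ≡ 0 (mod q). Then n ≡ 0 (mod q). -/
/-! Subtracting the third relation from the first gives `n m l' = 2n`, so
`4n = 2 n m l' = n (m l')² = m² (n l'²) = 0`; since `q` is odd, `q ∣ 4n` forces `q ∣ n`. -/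

theorem four_mul_eq_zero_of_relations {R : Type*} [CommRing R] {n l l' m : R}
    (h1 : n * (l ^ 2 + 1) = 0) (h2 : n * l' ^ 2 = 0) (h3 : l ^ 2 + m * l' - 1 = 0) :
    4 * n = 0 := by
  linear_combination (2 + m * l') * h1 + m ^ 2 * h2 - (2 + m * l') * n * h3

theorem Int.dvd_of_dvd_four_mul_of_odd {q n : ℤ} (hq : Odd q) (h : q ∣ 4 * n) : q ∣ n := by
  have hcop : IsCoprime q (2 ^ 2) := (Int.isCoprime_two_right.2 hq).pow_right
  exact hcop.dvd_of_dvd_mul_left (by norm_num [h])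

/-- Number-theoretic core of the odd-`q` uniqueness proof: if `q` is odd and
`q ∣ n(l²+1)`, `q ∣ n·l'²`, `q ∣ l² + m·l' − 1`, then `q ∣ n`. -/
theorem odd_q_twist_vanishes (n q l l' m : ℤ) (hq : Odd q)
    (h1 : q ∣ n * (l ^ 2 + 1))
    (h2 : q ∣ n * l' ^ 2)
    (h3 : q ∣ l ^ 2 + m * l' - 1) :
    q ∣ n := by
  let π := Ideal.Quotient.mk (Ideal.span {q})
  have hzero {x : ℤ} (hx : q ∣ x) : π x = 0 := (Ideal.Quotient.eq_zero_iff_dvd q x).2 hx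
  have h4 : π (4 * n) = 0 := by
    rw [map_mul, map_ofNat]
    exact four_mul_eq_zero_of_relations (n := π n) (l := π l) (l' := π l') (m := π m)
      (by simpa only [map_mul, map_add, map_pow, map_one] using hzero h1)
      (by simpa only [map_mul, map_pow] using hzero h2)
      (by simpa only [map_add, map_sub, map_mul, map_pow, map_one] using hzero h3)
  exact Int.dvd_of_dvd_four_mul_of_odd hq ((Ideal.Quotient.eq_zero_iff_dvd q _).1 h4)
end
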